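/- arXiv:2004.02825 — 3 statements merged into one kernel-verified Lean document; each statement's English description precedes it below -/
import Mathlib

section
/- Suppose |p| ≥ 2√2/π, and let λ ≥ 0 satisfy p = (√2/2π)∫₀^{2π} √(cos²(κ₀x/2)+λ) dx (assume p ≥ 0). Let x₀ ∈ [0,2π] be such that √(2(cos²(κ₀x₀/2)+λ)) = p, and define φ(x) = ∫_{x₀}^x (√(2cos²(κ₀y/2)+2λ) − p) dy. Then φ is C¹, its periodic extension is 2π-periodic, and ½(p + φ'(x))² − cos²(κ₀x/2) = λ for all x. -/
open Real Set

set_option maxHeartbeats 1000000 in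
/-- For `|p| ≥ 2√2/π` (with `p ≥ 0`), the function
`φ(x) = ∫_{x₀}^x (√(2cos²(κ₀y/2) + 2λ) − p) dy` is a `C¹`, `2π`-periodic classical
solution of the cell problem `½(p + φ')² − cos²(κ₀x/2) = λ`. -/
theorem stmt6 (κ₀ : ℕ) (hκ : 0 < κ₀) (p lam : ℝ) (hlam : 0 ≤ lam)
    (hp0 : 0 ≤ p) (hp : 2 * Real.sqrt 2 / π ≤ |p|)
    (hplam : p = (Real.sqrt 2 / (2 * π)) * ∫ x in (0)..(2 * π),
        Real.sqrt (Real.cos (κ₀ * x / 2) ^ 2 + lam))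
    (x₀ : ℝ) (hx₀ : x₀ ∈ Set.Icc 0 (2 * π))
    (hx₀p : Real.sqrt (2 * (Real.cos (κ₀ * x₀ / 2) ^ 2 + lam)) = p)
    (φ : ℝ → ℝ)
    (hφ : ∀ x, φ x = ∫ y in x₀..x,
        (Real.sqrt (2 * Real.cos (κ₀ * y / 2) ^ 2 + 2 * lam) - p)) :
    ContDiff ℝ 1 φ ∧
    (∀ x, φ (x + 2 * π) = φ x) ∧
    ∀ x, (p + deriv φ x) ^ 2 / 2 - Real.cos (κ₀ * x / 2) ^ 2 = lam := by
  set f : ℝ → ℝ := fun y => Real.sqrt (2 * Real.cos (κ₀ * y / 2) ^ 2 + 2 * lam) - p with hf_def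
  have hφ' : φ = fun x => ∫ y in x₀..x, f y := funext hφ
  have hf_cont : Continuous f := by
    apply Continuous.sub _ continuous_const
    exact Real.continuous_sqrt.comp (by fun_prop)
  -- derivative
  have hderiv : ∀ x, HasDerivAt φ (f x) x := by
    intro x
    rw [hφ']
    exact intervalIntegral.integral_hasDerivAt_right (hf_cont.intervalIntegrable _ _)
      (hf_cont.stronglyMeasurableAtFilter _ _) hf_cont.continuousAt
  have hderiv_eq : deriv φ = f := funext fun x => (hderiv x).deriv
  -- periodicity of f
  have hper : Function.Periodic f (2 * π) := by
    intro y
    have h1 : (κ₀ : ℝ) * (y + 2 * π) / 2 = κ₀ * y / 2 + κ₀ * π := by ring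
    have h2 : Real.cos (κ₀ * y / 2 + κ₀ * π) ^ 2 = Real.cos (κ₀ * y / 2) ^ 2 := by
      rw [Real.cos_add, Real.sin_nat_mul_pi]
      have hc : Real.cos ((κ₀ : ℝ) * π) ^ 2 = 1 := by
        have := Real.sin_sq_add_cos_sq ((κ₀ : ℝ) * π)
        rw [Real.sin_nat_mul_pi] at this
        linarith
      ring_nf
      nlinarith [hc]
    simp only [hf_def, h1, h2]
  -- value of integral over one period
  have hπ : (0:ℝ) < π := Real.pi_pos
  have hint0 : (∫ y in (0:ℝ)..(2 * π), f y) = 0 := by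
    have hi1 : IntervalIntegrable
        (fun y => Real.sqrt (2 * Real.cos (κ₀ * y / 2) ^ 2 + 2 * lam))
        MeasureTheory.volume 0 (2 * π) :=
      (Real.continuous_sqrt.comp (by fun_prop)).intervalIntegrable _ _
    have hsplit : (∫ y in (0:ℝ)..(2 * π), f y)
        = (∫ y in (0:ℝ)..(2 * π), Real.sqrt (2 * Real.cos (κ₀ * y / 2) ^ 2 + 2 * lam))
          - (∫ y in (0:ℝ)..(2 * π), p) :=
      intervalIntegral.integral_sub hi1 intervalIntegrable_const
    have heq : ∀ y, Real.sqrt (2 * Real.cos (κ₀ * y / 2) ^ 2 + 2 * lam)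
        = Real.sqrt 2 * Real.sqrt (Real.cos (κ₀ * y / 2) ^ 2 + lam) := by
      intro y
      rw [← Real.sqrt_mul (by norm_num : (0:ℝ) ≤ 2)]
      ring_nf
    have h1 : (∫ y in (0:ℝ)..(2 * π), Real.sqrt (2 * Real.cos (κ₀ * y / 2) ^ 2 + 2 * lam))
        = Real.sqrt 2 * ∫ y in (0:ℝ)..(2 * π), Real.sqrt (Real.cos (κ₀ * y / 2) ^ 2 + lam) := by
      simp_rw [heq]
      rw [intervalIntegral.integral_const_mul]
    have hs2 : Real.sqrt 2 > 0 := Real.sqrt_pos.mpr (by norm_num)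
    have h2 : Real.sqrt 2 * (∫ y in (0:ℝ)..(2 * π), Real.sqrt (Real.cos (κ₀ * y / 2) ^ 2 + lam))
        = 2 * π * p := by
      rw [hplam]; field_simp
    rw [hsplit, h1, h2, intervalIntegral.integral_const]
    simp
  constructor
  · rw [contDiff_one_iff_deriv]
    exact ⟨fun x => (hderiv x).differentiableAt, hderiv_eq ▸ hf_cont⟩
  constructor
  · intro x
    rw [hφ' ]
    simp only
    have hadd : (∫ y in x₀..(x + 2 * π), f y)
        = (∫ y in x₀..x, f y) + ∫ y in x..(x + 2 * π), f y :=
      (intervalIntegral.integral_add_adjacent_intervals (hf_cont.intervalIntegrable _ _)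
        (hf_cont.intervalIntegrable _ _)).symm
    have hper_int : (∫ y in x..(x + 2 * π), f y) = ∫ y in (0:ℝ)..(2 * π), f y := by
      simpa using hper.intervalIntegral_add_eq x 0
    rw [hadd, hper_int, hint0, add_zero]
  · intro x
    rw [hderiv_eq]
    have hx : p + f x = Real.sqrt (2 * Real.cos (κ₀ * x / 2) ^ 2 + 2 * lam) := by
      simp [hf_def]
    rw [hx, Real.sq_sqrt (by positivity)]
    ring
end

section
/- Let |p| ≤ 2√2/π, x₀ a zero of cos(κ₀·/2), and x̄ ∈ [x₀, x₀+2π] with ∫_{x₀}^{x̄}|cos(κ₀y/2)|dy = 2 + pπ/√2. Define φ(x) = ∫_{x₀}^{x}(√2|cos(κ₀y/2)| − p)dy for x₀ ≤ x ≤ x̄ and φ(x) = ∫_{x}^{x₀+2π}(√2|cos(κ₀y/2)| + p)dy for x̄ ≤ x ≤ x₀+2π. Then φ(x₀) = φ(x₀+2π) = 0 (so φ extends to a continuous 2π-periodic function), φ is Lipschitz, and wherever φ is differentiable, ½(p + φ'(x))² = cos²(κ₀x/2). -/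
open Real Set

/-- For `|p| ≤ 2√2/π`, the piecewise-defined function `φ` built from `x₀` and `x̄`
vanishes at both endpoints of the period (hence extends to a continuous `2π`-periodic
function), is Lipschitz on the period interval, and solves
`½(p + φ')² = cos²(κ₀ x / 2)` wherever it is differentiable. -/
theorem stmt8 (κ₀ : ℕ) (hκ : 0 < κ₀) (p : ℝ) (hp : |p| ≤ 2 * Real.sqrt 2 / π)
    (x₀ : ℝ) (hx₀zero : Real.cos (κ₀ * x₀ / 2) = 0)
    (xb : ℝ) (hxb : xb ∈ Set.Icc x₀ (x₀ + 2 * π))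
    (hxbint : (∫ y in x₀..xb, |Real.cos (κ₀ * y / 2)|) = 2 + p * π / Real.sqrt 2)
    (φ : ℝ → ℝ)
    (hφ₁ : ∀ x ∈ Set.Icc x₀ xb,
        φ x = ∫ y in x₀..x, (Real.sqrt 2 * |Real.cos (κ₀ * y / 2)| - p))
    (hφ₂ : ∀ x ∈ Set.Icc xb (x₀ + 2 * π),
        φ x = ∫ y in x..(x₀ + 2 * π), (Real.sqrt 2 * |Real.cos (κ₀ * y / 2)| + p)) :
    φ x₀ = 0 ∧ φ (x₀ + 2 * π) = 0 ∧
    (∃ L : NNReal, LipschitzOnWith L φ (Set.Icc x₀ (x₀ + 2 * π))) ∧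
    ∀ x ∈ Set.Ioo x₀ (x₀ + 2 * π), DifferentiableAt ℝ φ x →
      (p + deriv φ x) ^ 2 / 2 = Real.cos (κ₀ * x / 2) ^ 2 := by
  obtain ⟨hxb1, hxb2⟩ := hxb
  set E := x₀ + 2 * π with hE
  set g₁ : ℝ → ℝ := fun y => Real.sqrt 2 * |Real.cos (κ₀ * y / 2)| - p with hg₁def
  set g₂ : ℝ → ℝ := fun y => Real.sqrt 2 * |Real.cos (κ₀ * y / 2)| + p with hg₂def
  have hcont : Continuous fun y : ℝ => Real.sqrt 2 * |Real.cos (κ₀ * y / 2)| := by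
    fun_prop
  have hg₁c : Continuous g₁ := hcont.sub continuous_const
  have hg₂c : Continuous g₂ := hcont.add continuous_const
  have int1 : ∀ a b : ℝ, IntervalIntegrable g₁ MeasureTheory.volume a b :=
    fun a b => hg₁c.intervalIntegrable a b
  have int2 : ∀ a b : ℝ, IntervalIntegrable g₂ MeasureTheory.volume a b :=
    fun a b => hg₂c.intervalIntegrable a b
  set C := Real.sqrt 2 + |p| with hCdef
  have hs2 : (0:ℝ) ≤ Real.sqrt 2 := Real.sqrt_nonneg 2
  have hCbound : ∀ y : ℝ, |g₁ y| ≤ C ∧ |g₂ y| ≤ C := by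
    intro y
    have h1 : |Real.cos (κ₀ * y / 2)| ≤ 1 := abs_cos_le_one _
    have h0 : (0:ℝ) ≤ |Real.cos (κ₀ * y / 2)| := abs_nonneg _
    have hm : Real.sqrt 2 * |Real.cos (κ₀ * y / 2)| ≤ Real.sqrt 2 :=
      by nlinarith
    have hp1 : -|p| ≤ p := neg_abs_le p
    have hp2 : p ≤ |p| := le_abs_self p
    constructor <;> rw [abs_le] <;> constructor <;> simp only [hg₁def, hg₂def] <;> nlinarith
  -- difference formulas on each piece
  have left : ∀ x ∈ Icc x₀ xb, ∀ y ∈ Icc x₀ xb, |φ x - φ y| ≤ C * |x - y| := by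
    intro x hx y hy
    have : φ x - φ y = ∫ z in y..x, g₁ z := by
      rw [hφ₁ x hx, hφ₁ y hy, intervalIntegral.integral_interval_sub_left (int1 x₀ x) (int1 x₀ y)]
    rw [this]
    have := intervalIntegral.norm_integral_le_of_norm_le_const
      (C := C) (f := g₁) (a := y) (b := x) (fun z _ => by
        rw [Real.norm_eq_abs]; exact (hCbound z).1)
    rwa [Real.norm_eq_abs] at this
  have right : ∀ x ∈ Icc xb E, ∀ y ∈ Icc xb E, |φ x - φ y| ≤ C * |x - y| := by
    intro x hx y hy
    have hadd : (∫ z in x..y, g₂ z) + (∫ z in y..E, g₂ z) = ∫ z in x..E, g₂ z :=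
      intervalIntegral.integral_add_adjacent_intervals (int2 x y) (int2 y E)
    have : φ x - φ y = ∫ z in x..y, g₂ z := by
      rw [hφ₂ x hx, hφ₂ y hy]; linarith
    rw [this]
    have hb := intervalIntegral.norm_integral_le_of_norm_le_const
      (C := C) (f := g₂) (a := x) (b := y) (fun z _ => by
        rw [Real.norm_eq_abs]; exact (hCbound z).2)
    rw [Real.norm_eq_abs] at hb
    calc |∫ z in x..y, g₂ z| ≤ C * |y - x| := hb
      _ = C * |x - y| := by rw [abs_sub_comm]
  have hCnn : (0:ℝ) ≤ C := by positivity
  have key : ∀ x ∈ Icc x₀ E, ∀ y ∈ Icc x₀ E, |φ x - φ y| ≤ C * |x - y| := by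
    have mixed : ∀ x y : ℝ, x ∈ Icc x₀ E → y ∈ Icc x₀ E → x ≤ xb → xb ≤ y →
        |φ x - φ y| ≤ C * |x - y| := by
      intro x y hx hy hxxb hxby
      have h1 := left x ⟨hx.1, hxxb⟩ xb ⟨hxb1, le_rfl⟩
      have h2 := right xb ⟨le_rfl, hxb2⟩ y ⟨hxby, hy.2⟩
      have e1 : |x - xb| = xb - x := by
        rw [abs_sub_comm]; exact abs_of_nonneg (by linarith)
      have e2 : |xb - y| = y - xb := by
        rw [abs_sub_comm]; exact abs_of_nonneg (by linarith)
      have h3 : |φ x - φ y| ≤ |φ x - φ xb| + |φ xb - φ y| := abs_sub_le _ _ _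
      have h4 : |x - y| = y - x := by
        rw [abs_sub_comm]; exact abs_of_nonneg (by linarith)
      rw [h4]; rw [e1] at h1; rw [e2] at h2; nlinarith
    intro x hx y hy
    rcases le_total x xb with h | h <;> rcases le_total y xb with h' | h'
    · exact left x ⟨hx.1, h⟩ y ⟨hy.1, h'⟩
    · exact mixed x y hx hy h h'
    · have := mixed y x hy hx h' h
      rwa [abs_sub_comm, abs_sub_comm x y]
    · exact right x ⟨h, hx.2⟩ y ⟨h', hy.2⟩
  refine ⟨?_, ?_, ?_, ?_⟩
  · rw [hφ₁ x₀ ⟨le_rfl, hxb1⟩, intervalIntegral.integral_same]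
  · rw [hφ₂ E ⟨hxb2, le_rfl⟩, intervalIntegral.integral_same]
  · refine ⟨⟨C, hCnn⟩, LipschitzOnWith.of_dist_le_mul ?_⟩
    intro x hx y hy
    rw [Real.dist_eq, Real.dist_eq]
    exact key x hx y hy
  · -- derivative statement
    have hF₁ : ∀ x : ℝ, HasDerivAt (fun u => ∫ y in x₀..u, g₁ y) (g₁ x) x :=
      fun x => (hg₁c.integral_hasStrictDerivAt x₀ x).hasDerivAt
    set F₂ : ℝ → ℝ := fun u => ∫ y in u..E, g₂ y with hF₂def
    have hF₂eq : ∀ u, F₂ u = (∫ y in x₀..E, g₂ y) - ∫ y in x₀..u, g₂ y := fun u =>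
      (intervalIntegral.integral_interval_sub_left (int2 x₀ E) (int2 x₀ u)).symm
    have hF₂ : ∀ x : ℝ, HasDerivAt F₂ (-(g₂ x)) x := by
      intro x
      have h := ((hg₂c.integral_hasStrictDerivAt x₀ x).hasDerivAt).const_sub
        (∫ y in x₀..E, g₂ y)
      refine h.congr_of_eventuallyEq ?_
      filter_upwards with u
      rw [hF₂eq u]
    intro x hx hdiff
    have habs : ∀ t : ℝ, (Real.sqrt 2 * |Real.cos (κ₀ * t / 2)|) ^ 2 / 2
        = Real.cos (κ₀ * t / 2) ^ 2 := by
      intro t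
      rw [mul_pow, Real.sq_sqrt (by norm_num : (0:ℝ) ≤ 2), sq_abs]; ring
    rcases lt_trichotomy x xb with hlt | heqx | hgt
    · have hmem : Ioo x₀ xb ∈ nhds x := isOpen_Ioo.mem_nhds ⟨hx.1, hlt⟩
      have heq : φ =ᶠ[nhds x] fun u => ∫ y in x₀..u, g₁ y :=
        Filter.eventuallyEq_of_mem hmem fun y hy => hφ₁ y ⟨hy.1.le, hy.2.le⟩
      have hderiv : deriv φ x = g₁ x := heq.deriv_eq.trans (hF₁ x).deriv
      rw [hderiv, hg₁def]
      have : p + (Real.sqrt 2 * |Real.cos (κ₀ * x / 2)| - p)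
          = Real.sqrt 2 * |Real.cos (κ₀ * x / 2)| := by ring
      rw [this, habs]
    · subst heqx
      have hd := hdiff.hasDerivAt
      have hud1 : UniqueDiffWithinAt ℝ (Iic x) x := uniqueDiffOn_Iic x x (mem_Iic.2 le_rfl)
      have hud2 : UniqueDiffWithinAt ℝ (Ici x) x := uniqueDiffOn_Ici x x (mem_Ici.2 le_rfl)
      have hmem1 : Icc x₀ x ∈ nhdsWithin x (Iic x) := by
        rw [← Ici_inter_Iic]
        exact Filter.inter_mem (mem_nhdsWithin_of_mem_nhds (Ici_mem_nhds hx.1))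
          self_mem_nhdsWithin
      have hmem2 : Icc x E ∈ nhdsWithin x (Ici x) := by
        rw [← Ici_inter_Iic]
        exact Filter.inter_mem self_mem_nhdsWithin
          (mem_nhdsWithin_of_mem_nhds (Iic_mem_nhds hx.2))
      have h1 : HasDerivWithinAt φ (g₁ x) (Iic x) x := by
        refine ((hF₁ x).hasDerivWithinAt).congr_of_eventuallyEq ?_ (hφ₁ x ⟨hxb1, le_rfl⟩)
        exact Filter.eventuallyEq_of_mem hmem1 fun y hy => hφ₁ y hy
      have h2 : HasDerivWithinAt φ (-(g₂ x)) (Ici x) x := by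
        refine ((hF₂ x).hasDerivWithinAt).congr_of_eventuallyEq ?_ (hφ₂ x ⟨le_rfl, hxb2⟩)
        exact Filter.eventuallyEq_of_mem hmem2 fun y hy => hφ₂ y hy
      have e1 : deriv φ x = g₁ x := by
        rw [← hd.hasDerivWithinAt.derivWithin hud1, h1.derivWithin hud1]
      have e2 : deriv φ x = -(g₂ x) := by
        rw [← hd.hasDerivWithinAt.derivWithin hud2, h2.derivWithin hud2]
      have hc0 : |Real.cos (κ₀ * x / 2)| = 0 := by
        have := e1.symm.trans e2
        simp only [hg₁def, hg₂def] at this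
        have h2pos : (0:ℝ) < Real.sqrt 2 := Real.sqrt_pos.mpr (by norm_num)
        nlinarith [abs_nonneg (Real.cos (κ₀ * x / 2))]
      have hcos : Real.cos (κ₀ * x / 2) = 0 := abs_eq_zero.mp hc0
      rw [e1, hg₁def, hcos]
      simp [hc0]
    · have hmem : Ioo xb E ∈ nhds x := isOpen_Ioo.mem_nhds ⟨hgt, hx.2⟩
      have heq : φ =ᶠ[nhds x] F₂ :=
        Filter.eventuallyEq_of_mem hmem fun y hy => hφ₂ y ⟨hy.1.le, hy.2.le⟩
      have hderiv : deriv φ x = -(g₂ x) := heq.deriv_eq.trans (hF₂ x).deriv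
      rw [hderiv, hg₂def]
      have : p + -(Real.sqrt 2 * |Real.cos (κ₀ * x / 2)| + p)
          = -(Real.sqrt 2 * |Real.cos (κ₀ * x / 2)|) := by ring
      rw [this, neg_pow, ← habs x]
      ring
end

section
/- Define the effective Hamiltonian H̄(p) for the Hamiltonian H(x,q) = q²/2 − cos²(κ₀x/2) by: H̄(p) = 0 if |p| ≤ 2√2/π, and H̄(p) = λ where λ ≥ 0 is the unique solution of |p| = (√2/2π)∫₀^{2π}√(cos²(κ₀x/2)+λ)dx if |p| ≥ 2√2/π. Then H̄ is well-defined and continuous on ℝ. -/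
/-!
For `λ ≥ 0` the mean momentum `Φ(λ) = (√2/2π) ∫₀^{2π} √(cos²(κ₀x/2) + λ) dx` is continuous,
strictly increasing and at least `√(2λ)`, and `Φ(0) = 2√2/π` because `∫₀^{2π} |cos(κ₀x/2)| dx = 4`.
Extending `Φ` to `λ < 0` by `Φ(0) + λ` gives an increasing homeomorphism `Φ̃` of `ℝ`, and
`H̄(p) = max 0 (Φ̃⁻¹ |p|)` is the required continuous function; it is unique because `Φ` is
injective on `[0, ∞)`.
-/

open Real Set Filter MeasureTheory intervalIntegral

noncomputable def linearExtendBelow (f : ℝ → ℝ) (l : ℝ) : ℝ := f (max l 0) + min l 0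

section LinearExtendBelow

variable {f : ℝ → ℝ}

lemma linearExtendBelow_of_nonneg {l : ℝ} (hl : 0 ≤ l) : linearExtendBelow f l = f l := by
  simp [linearExtendBelow, hl]

lemma linearExtendBelow_of_nonpos {l : ℝ} (hl : l ≤ 0) : linearExtendBelow f l = f 0 + l := by
  simp [linearExtendBelow, hl]

lemma strictMono_linearExtendBelow (hm : StrictMonoOn f (Ici 0)) :
    StrictMono (linearExtendBelow f) := by
  intro a b hab
  rcases lt_or_ge a 0 with ha | ha
  · have hmax : f (max a 0) ≤ f (max b 0) :=
      hm.monotoneOn (le_max_right a 0) (le_max_right b 0) (max_le_max_right 0 hab.le)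
    have hmin : min a 0 < min b 0 := by rw [min_eq_left ha.le]; exact lt_min hab ha
    exact add_lt_add_of_le_of_lt hmax hmin
  · rw [linearExtendBelow_of_nonneg ha, linearExtendBelow_of_nonneg (ha.trans hab.le)]
    exact hm ha (ha.trans hab.le) hab

lemma continuous_linearExtendBelow (hc : ContinuousOn f (Ici 0)) :
    Continuous (linearExtendBelow f) :=
  (hc.comp_continuous (by fun_prop) fun l => le_max_right l 0).add (by fun_prop)

lemma surjective_linearExtendBelow (hc : ContinuousOn f (Ici 0)) (ht : Tendsto f atTop atTop) :
    Function.Surjective (linearExtendBelow f) := by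
  refine (continuous_linearExtendBelow hc).surjective ?_ ?_
  · refine ht.congr' ?_
    filter_upwards [eventually_ge_atTop 0] with l hl
    exact (linearExtendBelow_of_nonneg hl).symm
  · refine (tendsto_atBot_add_const_left _ (f 0) tendsto_id).congr' ?_
    filter_upwards [eventually_le_atBot 0] with l hl
    exact (linearExtendBelow_of_nonpos hl).symm

end LinearExtendBelow

theorem existsUnique_continuous_inverse_of_strictMonoOn_Ici {X : Type*} [TopologicalSpace X]
    {f : ℝ → ℝ} (hc : ContinuousOn f (Ici 0)) (hm : StrictMonoOn f (Ici 0))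
    (ht : Tendsto f atTop atTop) {g : X → ℝ} (hg : Continuous g) :
    ∃! H : X → ℝ, Continuous H ∧ (∀ p, g p ≤ f 0 → H p = 0) ∧
      (∀ p, f 0 ≤ g p → 0 ≤ H p ∧ g p = f (H p)) := by
  set e : ℝ ≃o ℝ := (strictMono_linearExtendBelow hm).orderIsoOfSurjective _
    (surjective_linearExtendBelow hc ht)
  have he0 : e 0 = f 0 := linearExtendBelow_of_nonneg le_rfl
  have symm_nonpos {y : ℝ} (hy : y ≤ f 0) : e.symm y ≤ 0 := by
    rw [← he0] at hy; simpa using e.symm.monotone hy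
  have symm_nonneg {y : ℝ} (hy : f 0 ≤ y) : 0 ≤ e.symm y := by
    rw [← he0] at hy; simpa using e.symm.monotone hy
  have apply_symm {y : ℝ} (hy : f 0 ≤ y) : f (e.symm y) = y := by
    rw [← linearExtendBelow_of_nonneg (f := f) (symm_nonneg hy)]
    exact e.apply_symm_apply y
  refine ⟨fun p => max 0 (e.symm (g p)), ⟨by fun_prop, fun p hp => ?_, fun p hp => ?_⟩, ?_⟩
  · exact max_eq_left (symm_nonpos hp)
  · refine ⟨le_max_left _ _, ?_⟩
    dsimp only
    rw [max_eq_right (symm_nonneg hp), apply_symm hp]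
  · rintro H ⟨-, hH₀, hH⟩
    funext p
    rcases le_total (g p) (f 0) with hp | hp
    · rw [hH₀ p hp, max_eq_left (symm_nonpos hp)]
    · rw [max_eq_right (symm_nonneg hp)]
      refine hm.injOn (hH p hp).1 (symm_nonneg hp) ?_
      rw [apply_symm hp, ← (hH p hp).2]

section SqrtAddIntegral

variable {φ : ℝ → ℝ} {a b : ℝ}

lemma continuous_integral_sqrt_add (hφ : Continuous φ) :
    Continuous fun l => ∫ x in a..b, √(φ x + l) :=
  continuous_parametric_intervalIntegral_of_continuous' (by fun_prop) a b

lemma strictMonoOn_integral_sqrt_add (hφ : Continuous φ) (hφ₀ : ∀ x, 0 ≤ φ x) (hab : a < b) :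
    StrictMonoOn (fun l => ∫ x in a..b, √(φ x + l)) (Ici 0) := by
  intro l hl m _ hlm
  refine integral_lt_integral_of_continuousOn_of_le_of_exists_lt hab (by fun_prop) (by fun_prop)
    (fun x _ => sqrt_le_sqrt (by linarith)) ⟨a, left_mem_Icc.2 hab.le, ?_⟩
  exact sqrt_lt_sqrt (add_nonneg (hφ₀ a) hl) (by linarith)

lemma mul_sqrt_le_integral_sqrt_add (hφ : Continuous φ) (hφ₀ : ∀ x, 0 ≤ φ x) (hab : a ≤ b)
    {l : ℝ} : (b - a) * √l ≤ ∫ x in a..b, √(φ x + l) := by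
  calc (b - a) * √l = ∫ _ in a..b, √l := by simp
    _ ≤ ∫ x in a..b, √(φ x + l) :=
      integral_mono_on hab intervalIntegrable_const
        ((by fun_prop : Continuous _).intervalIntegrable _ _) fun x _ => sqrt_le_sqrt (by linarith [hφ₀ x])

lemma tendsto_integral_sqrt_add_atTop (hφ : Continuous φ) (hφ₀ : ∀ x, 0 ≤ φ x) (hab : a < b) :
    Tendsto (fun l => ∫ x in a..b, √(φ x + l)) atTop atTop :=
  tendsto_atTop_mono (fun _ => mul_sqrt_le_integral_sqrt_add hφ hφ₀ hab.le)
    (tendsto_sqrt_atTop.const_mul_atTop (sub_pos.2 hab))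

end SqrtAddIntegral

lemma integral_abs_cos_zero_pi : ∫ u in 0..π, |cos u| = 2 := by
  have hint : ∀ a b : ℝ, IntervalIntegrable (fun u => |cos u|) volume a b :=
    fun a b => continuous_cos.abs.intervalIntegrable a b
  rw [← integral_add_adjacent_intervals (hint 0 (π / 2)) (hint (π / 2) π)]
  have h₁ : ∫ u in 0..π / 2, |cos u| = ∫ u in 0..π / 2, cos u := by
    refine integral_congr fun x hx => abs_of_nonneg (cos_nonneg_of_mem_Icc ?_)
    rw [uIcc_of_le (by positivity)] at hx
    exact ⟨by linarith [hx.1, pi_pos], hx.2⟩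
  have h₂ : ∫ u in π / 2..π, |cos u| = ∫ u in π / 2..π, -cos u := by
    refine integral_congr fun x hx => abs_of_nonpos ?_
    rw [uIcc_of_le (by linarith [pi_pos])] at hx
    exact cos_nonpos_of_pi_div_two_le_of_le hx.1 (by linarith [hx.2, pi_pos])
  rw [h₁, h₂, integral_cos, intervalIntegral.integral_neg, integral_cos]
  norm_num

lemma integral_abs_cos_zero_nat_mul_pi (n : ℕ) : ∫ u in 0..n * π, |cos u| = 2 * n := by
  have hper : Function.Periodic (fun u => |cos u|) π := fun u => by simp [cos_add_pi]
  have := hper.intervalIntegral_add_zsmul_eq n 0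
    fun a b => continuous_cos.abs.intervalIntegrable a b
  simpa [integral_abs_cos_zero_pi, mul_comm] using this

lemma integral_abs_cos_mul_div_two {κ : ℕ} (hκ : 0 < κ) :
    ∫ x in 0..2 * π, |cos (κ * x / 2)| = 4 := by
  have hκ' : (κ : ℝ) / 2 ≠ 0 := by positivity
  calc ∫ x in 0..2 * π, |cos (κ * x / 2)| = ∫ x in 0..2 * π, |cos (x * (κ / 2))| := by
        simp only [mul_div_assoc, mul_comm]
    _ = 4 := by
      rw [integral_comp_mul_right (fun u => |cos u|) hκ', zero_mul,
        show 2 * π * (κ / 2) = κ * π by ring, integral_abs_cos_zero_nat_mul_pi, smul_eq_mul]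
      field_simp
      ring

/-- Along the level set `q ^ 2 / 2 - cos (κ x / 2) ^ 2 = λ` the momentum is
`q = √2 · √(cos (κ x / 2) ^ 2 + λ)`; this is its mean over a period `[0, 2π]`. -/
noncomputable def meanMomentum (κ l : ℝ) : ℝ :=
  √2 / (2 * π) * ∫ x in 0..2 * π, √(cos (κ * x / 2) ^ 2 + l)

section MeanMomentum

variable (κ : ℝ)

lemma continuous_meanMomentum : Continuous (meanMomentum κ) :=
  continuous_const.mul (continuous_integral_sqrt_add (by fun_prop))

lemma strictMonoOn_meanMomentum : StrictMonoOn (meanMomentum κ) (Ici 0) :=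
  fun _ hl _ hm hlm => mul_lt_mul_of_pos_left
    (strictMonoOn_integral_sqrt_add (by fun_prop) (fun _ => sq_nonneg _) (by positivity) hl hm hlm)
    (by positivity)

lemma tendsto_meanMomentum_atTop : Tendsto (meanMomentum κ) atTop atTop :=
  (tendsto_integral_sqrt_add_atTop (by fun_prop) (fun _ => sq_nonneg _)
    (by positivity)).const_mul_atTop (by positivity)

end MeanMomentum

lemma meanMomentum_zero {κ : ℕ} (hκ : 0 < κ) : meanMomentum κ 0 = 2 * √2 / π := by
  simp only [meanMomentum, add_zero, sqrt_sq_eq_abs, integral_abs_cos_mul_div_two hκ]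
  field_simp
  ring

/-- The effective Hamiltonian `H̄`, defined by `H̄(p) = 0` for `|p| ≤ 2√2/π` and by
`|p| = (√2/2π)∫₀^{2π}√(cos²(κ₀x/2) + H̄(p)) dx` with `H̄(p) ≥ 0` for `|p| ≥ 2√2/π`, is
well-defined (exists and is unique) and continuous on `ℝ`. -/
theorem stmt12 (κ₀ : ℕ) (hκ : 0 < κ₀) :
    ∃! Hbar : ℝ → ℝ,
      Continuous Hbar ∧
      (∀ p : ℝ, |p| ≤ 2 * Real.sqrt 2 / π → Hbar p = 0) ∧
      (∀ p : ℝ, 2 * Real.sqrt 2 / π ≤ |p| →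
        0 ≤ Hbar p ∧
        |p| = (Real.sqrt 2 / (2 * π)) * ∫ x in (0)..(2 * π),
            Real.sqrt (Real.cos (κ₀ * x / 2) ^ 2 + Hbar p)) := by
  have h := existsUnique_continuous_inverse_of_strictMonoOn_Ici
    (continuous_meanMomentum κ₀).continuousOn (strictMonoOn_meanMomentum κ₀)
    (tendsto_meanMomentum_atTop κ₀) continuous_abs
  rw [meanMomentum_zero hκ] at h
  exact h
end
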